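/- (Martinez-Maure, Lemma 1.) Let h : ℝ² \ {0} → ℝ be positively 1-homogeneous and C², with plane hedgehog map x_h : S¹ → ℝ², x_h(p) = ∇h(p). Suppose s ∈ x_h(S¹) is an extremal point of the hedgehog in direction n ∈ S¹, i.e., ⟨x_h(p), n⟩ ≤ ⟨s, n⟩ for all p ∈ S¹. Then the connected components of x_h^{-1}(s) in S¹ are separated from one another by the points n and −n; precisely, if Γ ⊂ S¹ is a closed arc whose two endpoints lie in x_h^{-1}(s) and whose interior is disjoint from {n, −n}, then Γ ⊂ x_h^{-1}(s). -/

import Mathlib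

/- Plane hedgehogs: for a positively 1-homogeneous `C²` function
`h : ℝ² \ {0} → ℝ`, the plane hedgehog map is `x_h p = gradient h p`,
`p ∈ S¹`. An arc of `S¹` is parametrized as
`θ ↦ (cos θ) • a + (sin θ) • b` for an orthonormal basis `(a, b)`. -/

open scoped RealInnerProductSpace
noncomputable section

abbrev E2 := EuclideanSpace ℝ (Fin 2)

/-- `h` is positively 1-homogeneous on `ℝ² \ {0}`. -/
def PosHomog2 (h : E2 → ℝ) : Prop :=
  ∀ t : ℝ, 0 < t → ∀ u : E2, u ≠ 0 → h (t • u) = t * h u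

/-! Along the arc write `s - ∇h (γ θ) = φ θ • γ θ + φ' θ • γ' θ` in the rotating frame
`(γ, γ')`. Euler's relation `⟪∇h p, p⟫ = h p` gives `φ θ = ⟪s, γ θ⟫ - h (γ θ)`, whose
derivative is `φ'`. With `v = ⟪n, γ'⟫` (so `v' = -⟪n, γ⟫`), extremality says that the
Wronskian `φ' v - φ v' = ⟪s - ∇h (γ θ), n⟫` is nonnegative, so `φ / v` is monotone inside
the arc, where `v ≠ 0` because the arc avoids `±n`. At both ends `φ = φ' = 0`, so `φ / v`
tends to `0` there; hence `φ / v = 0`, then `φ = φ' = 0`, i.e. `∇h (γ θ) = s`. -/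

open Set Filter Topology

theorem tendsto_div_nhdsNE_zero_of_hasDerivAt {φ v : ℝ → ℝ} {c w : ℝ} (hφ : HasDerivAt φ 0 c)
    (hφc : φ c = 0) (hv : HasDerivAt v w c) (hvw : v c ≠ 0 ∨ w ≠ 0) :
    Tendsto (φ / v) (𝓝[≠] c) (𝓝 0) := by
  by_cases hvc : v c = 0
  · -- near a zero of `v`, `φ / v` is the quotient of the slopes of `φ` and `v` at `c`
    have hslope := (hasDerivAt_iff_tendsto_slope.1 hφ).div (hasDerivAt_iff_tendsto_slope.1 hv)
      (hvw.resolve_left (not_not.2 hvc))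
    rw [zero_div] at hslope
    refine hslope.congr' (eventually_nhdsWithin_of_forall fun x hx => ?_)
    have hxc : x - c ≠ 0 := sub_ne_zero.2 hx
    simp only [Pi.div_apply, slope_def_field, hφc, hvc, sub_zero]
    field_simp
  · simpa [hφc] using
      ((hφ.continuousAt.div hv.continuousAt hvc).tendsto).mono_left nhdsWithin_le_nhds

theorem monotoneOn_div_of_wronskian_nonneg {φ φ' v w : ℝ → ℝ} {a b : ℝ}
    (hφ : ∀ x ∈ Ioo a b, HasDerivAt φ (φ' x) x) (hv : ∀ x ∈ Ioo a b, HasDerivAt v (w x) x)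
    (hv0 : ∀ x ∈ Ioo a b, v x ≠ 0) (hW : ∀ x ∈ Ioo a b, 0 ≤ φ' x * v x - φ x * w x) :
    MonotoneOn (φ / v) (Ioo a b) := by
  have hdiv (x) (hx : x ∈ Ioo a b) := (hφ x hx).div (hv x hx) (hv0 x hx)
  refine monotoneOn_of_hasDerivWithinAt_nonneg
    (f' := fun x => (φ' x * v x - φ x * w x) / v x ^ 2) (convex_Ioo a b)
    (fun x hx => (hdiv x hx).continuousAt.continuousWithinAt) (fun x hx => ?_) (fun x hx => ?_)
  · rw [interior_Ioo] at hx
    exact (hdiv x hx).hasDerivWithinAt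
  · rw [interior_Ioo] at hx
    exact div_nonneg (hW x hx) (sq_nonneg _)

theorem eqOn_zero_of_monotoneOn_of_tendsto {g : ℝ → ℝ} {a b : ℝ} (hg : MonotoneOn g (Ioo a b))
    (ha : Tendsto g (𝓝[>] a) (𝓝 0)) (hb : Tendsto g (𝓝[<] b) (𝓝 0)) : EqOn g 0 (Ioo a b) := by
  intro x hx
  refine le_antisymm (ge_of_tendsto hb ?_) (le_of_tendsto ha ?_)
  · filter_upwards [Ico_mem_nhdsLT hx.2] with y hy
    exact hg hx ⟨hx.1.trans_le hy.1, hy.2⟩ hy.1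
  · filter_upwards [Ioc_mem_nhdsGT hx.1] with y hy
    exact hg ⟨hy.1, hy.2.trans_lt hx.2⟩ hx hy.2

theorem eq_zero_of_wronskian_nonneg {φ φ' v w : ℝ → ℝ} {a b : ℝ}
    (hφ : ∀ x ∈ Icc a b, HasDerivAt φ (φ' x) x) (hv : ∀ x ∈ Icc a b, HasDerivAt v (w x) x)
    (ha : φ a = 0) (ha' : φ' a = 0) (hb : φ b = 0) (hb' : φ' b = 0)
    (hvwa : v a ≠ 0 ∨ w a ≠ 0) (hvwb : v b ≠ 0 ∨ w b ≠ 0)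
    (hv0 : ∀ x ∈ Ioo a b, v x ≠ 0) (hW : ∀ x ∈ Ioo a b, 0 ≤ φ' x * v x - φ x * w x) :
    ∀ x ∈ Ioo a b, φ x = 0 ∧ φ' x = 0 := by
  intro x hx
  have hab : a ≤ b := (hx.1.trans hx.2).le
  have hzero : EqOn (φ / v) 0 (Ioo a b) :=
    eqOn_zero_of_monotoneOn_of_tendsto
      (monotoneOn_div_of_wronskian_nonneg (fun x hx => hφ x (Ioo_subset_Icc_self hx))
        (fun x hx => hv x (Ioo_subset_Icc_self hx)) hv0 hW)
      ((tendsto_div_nhdsNE_zero_of_hasDerivAt (ha' ▸ hφ a ⟨le_rfl, hab⟩) ha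
        (hv a ⟨le_rfl, hab⟩) hvwa).mono_left (nhdsWithin_mono _ fun y hy => ne_of_gt hy))
      ((tendsto_div_nhdsNE_zero_of_hasDerivAt (hb' ▸ hφ b ⟨hab, le_rfl⟩) hb
        (hv b ⟨hab, le_rfl⟩) hvwb).mono_left (nhdsWithin_mono _ fun y hy => ne_of_lt hy))
  have hφ0 : φ =ᶠ[𝓝 x] fun _ => 0 := by
    filter_upwards [Ioo_mem_nhds hx.1 hx.2] with y hy
    simpa [hv0 y hy] using hzero hy
  exact ⟨hφ0.eq_of_nhds, (hφ x (Ioo_subset_Icc_self hx)).unique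
    ((hasDerivAt_const x 0).congr_of_eventuallyEq hφ0)⟩

theorem fderiv_apply_self_of_homogeneous {E : Type*} [NormedAddCommGroup E] [NormedSpace ℝ E]
    {h : E → ℝ} {p : E} (hd : DifferentiableAt ℝ h p)
    (hhom : ∀ t : ℝ, 0 < t → h (t • p) = t * h p) : fderiv ℝ h p p = h p := by
  have hray : HasDerivAt (fun t : ℝ => h (t • p)) (fderiv ℝ h p p) 1 := by
    have hline : HasDerivAt (fun t : ℝ => t • p) p 1 := by
      simpa using (hasDerivAt_id (1 : ℝ)).smul_const p
    exact hd.hasFDerivAt.comp_hasDerivAt_of_eq 1 hline (one_smul ℝ p).symm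
  refine hray.unique ((hasDerivAt_mul_const (h p)).congr_of_eventuallyEq ?_)
  filter_upwards [Ioi_mem_nhds one_pos] with t ht
  exact hhom t ht

section Plane

variable {E : Type*} [NormedAddCommGroup E] [InnerProductSpace ℝ E]

theorem Orthonormal.inner_eq_of_finrank_eq_two (hE : Module.finrank ℝ E = 2) {e : Fin 2 → E}
    (he : Orthonormal ℝ e) (x y : E) :
    ⟪x, y⟫ = ⟪x, e 0⟫ * ⟪y, e 0⟫ + ⟪x, e 1⟫ * ⟪y, e 1⟫ := by
  have hspan := he.linearIndependent.span_eq_top_of_card_eq_finrank (by simp [hE])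
  rw [← (OrthonormalBasis.mk he hspan.ge).sum_inner_mul_inner x y, Fin.sum_univ_two,
    OrthonormalBasis.coe_mk, real_inner_comm y, real_inner_comm y]

theorem Orthonormal.inner_ne_zero_of_ne_of_ne_neg (hE : Module.finrank ℝ E = 2) {e : Fin 2 → E}
    (he : Orthonormal ℝ e) {n : E} (hn : ‖n‖ = 1) (hpos : e 0 ≠ n) (hneg : e 0 ≠ -n) :
    ⟪n, e 1⟫ ≠ 0 := by
  intro h1
  have hsq : ⟪e 0, n⟫ ^ 2 = 1 := by
    have := he.inner_eq_of_finrank_eq_two hE n n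
    rw [real_inner_self_eq_norm_sq, hn, h1, real_inner_comm] at this
    linear_combination -this
  rcases sq_eq_one_iff.1 hsq with h0 | h0
  · exact hpos ((inner_eq_one_iff_of_norm_eq_one (he.norm_eq_one 0) hn).1 h0)
  · exact hneg ((inner_eq_neg_one_iff_of_norm_eq_one (he.norm_eq_one 0) hn).1 h0)

theorem Orthonormal.rotate {a b : E} (h : Orthonormal ℝ ![a, b]) (θ : ℝ) :
    Orthonormal ℝ ![Real.cos θ • a + Real.sin θ • b, -Real.sin θ • a + Real.cos θ • b] := by
  simp only [orthonormal_vecCons_iff, Fin.forall_fin_one, Matrix.cons_val_zero] at h ⊢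
  obtain ⟨ha, hab, hb, -⟩ := h
  have hinner (c₁ s₁ c₂ s₂ : ℝ) : ⟪c₁ • a + s₁ • b, c₂ • a + s₂ • b⟫ = c₁ * c₂ + s₁ * s₂ := by
    simp only [inner_add_left, inner_add_right, real_inner_smul_left, real_inner_smul_right,
      real_inner_self_eq_norm_sq, ha, hb, hab, real_inner_comm a b]
    ring
  simp only [norm_eq_sqrt_real_inner, hinner, Real.sqrt_eq_one]
  exact ⟨by linear_combination Real.cos_sq_add_sin_sq θ, by ring,
    by linear_combination Real.sin_sq_add_cos_sq θ, by simp⟩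

theorem hasDerivAt_inner_sub_gradient_self [CompleteSpace E] {h : E → ℝ} {γ γ' : ℝ → E}
    {s : E} {θ : ℝ}
    (hd : ∀ θ, DifferentiableAt ℝ h (γ θ))
    (hhom : ∀ θ, ∀ t : ℝ, 0 < t → h (t • γ θ) = t * h (γ θ)) (hγ : HasDerivAt γ (γ' θ) θ) :
    HasDerivAt (fun θ => ⟪s - gradient h (γ θ), γ θ⟫) ⟪s - gradient h (γ θ), γ' θ⟫ θ := by
  have heuler : (fun θ => ⟪s - gradient h (γ θ), γ θ⟫) = fun θ => ⟪s, γ θ⟫ - h (γ θ) := by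
    ext θ
    rw [inner_sub_left, inner_gradient_left, fderiv_apply_self_of_homogeneous (hd θ) (hhom θ)]
  rw [heuler, inner_sub_left, inner_gradient_left]
  have := ((hasDerivAt_const θ s).inner ℝ hγ).sub ((hd θ).hasFDerivAt.comp_hasDerivAt θ hγ)
  rwa [inner_zero_left, add_zero] at this

theorem gradient_eq_on_arc_of_extremal [CompleteSpace E] (hE : Module.finrank ℝ E = 2)
    {h : E → ℝ}
    (hhom : ∀ t : ℝ, 0 < t → ∀ u : E, u ≠ 0 → h (t • u) = t * h u)
    (hd : DifferentiableOn ℝ h {0}ᶜ) {n s : E} (hn : ‖n‖ = 1)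
    {γ γ' : ℝ → E} (hframe : ∀ θ, Orthonormal ℝ ![γ θ, γ' θ])
    (hγ : ∀ θ, HasDerivAt γ (γ' θ) θ) (hγ' : ∀ θ, HasDerivAt γ' (-γ θ) θ) {θ₁ θ₂ : ℝ}
    (hextr : ∀ θ ∈ Ioo θ₁ θ₂, ⟪gradient h (γ θ), n⟫ ≤ ⟪s, n⟫)
    (hend₁ : gradient h (γ θ₁) = s) (hend₂ : gradient h (γ θ₂) = s)
    (hint : ∀ θ ∈ Ioo θ₁ θ₂, γ θ ≠ n ∧ γ θ ≠ -n) :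
    ∀ θ ∈ Icc θ₁ θ₂, gradient h (γ θ) = s := by
  have hγ0 (θ : ℝ) : γ θ ≠ 0 := by
    have : ‖γ θ‖ = 1 := by simpa using (hframe θ).norm_eq_one 0
    exact norm_ne_zero_iff.1 (by simp [this])
  have hparseval (θ : ℝ) := (hframe θ).inner_eq_of_finrank_eq_two hE
  simp only [Matrix.cons_val_zero, Matrix.cons_val_one] at hparseval
  have hφ (θ : ℝ) : HasDerivAt (fun θ => ⟪s - gradient h (γ θ), γ θ⟫)
      ⟪s - gradient h (γ θ), γ' θ⟫ θ :=
    hasDerivAt_inner_sub_gradient_self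
      (fun θ => hd.differentiableAt (isOpen_compl_singleton.mem_nhds (hγ0 θ)))
      (fun θ t ht => hhom t ht _ (hγ0 θ)) (hγ θ)
  have hv (θ : ℝ) : HasDerivAt (fun θ => ⟪n, γ' θ⟫) (-⟪n, γ θ⟫) θ := by
    simpa using (hasDerivAt_const θ n).inner ℝ (hγ' θ)
  have hvw (θ : ℝ) : ⟪n, γ' θ⟫ ≠ 0 ∨ -⟪n, γ θ⟫ ≠ 0 := by
    have := hparseval θ n n
    rw [real_inner_self_eq_norm_sq, hn] at this
    by_contra! h0
    simp only [neg_eq_zero] at h0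
    simp [h0] at this
  have hzero := eq_zero_of_wronskian_nonneg (fun θ _ => hφ θ) (fun θ _ => hv θ)
    (by simp [hend₁]) (by simp [hend₁]) (by simp [hend₂]) (by simp [hend₂]) (hvw θ₁) (hvw θ₂)
    (fun θ hθ => (hframe θ).inner_ne_zero_of_ne_of_ne_neg hE hn (hint θ hθ).1 (hint θ hθ).2)
    (fun θ hθ => by
      have := hparseval θ (s - gradient h (γ θ)) n
      rw [inner_sub_left] at this
      linarith [hextr θ hθ])
  intro θ hθ
  rcases hθ.1.eq_or_lt with rfl | h₁
  · exact hend₁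
  rcases hθ.2.eq_or_lt with rfl | h₂
  · exact hend₂
  obtain ⟨hφ0, hφ'0⟩ := hzero θ ⟨h₁, h₂⟩
  have hY : ⟪s - gradient h (γ θ), s - gradient h (γ θ)⟫ = 0 := by
    rw [hparseval θ, hφ0, hφ'0, mul_zero, add_zero]
  exact (sub_eq_zero.1 (inner_self_eq_zero.1 hY)).symm

end Plane

theorem plane_hedgehog_extremal_components_general
    (h : E2 → ℝ) (hhom : PosHomog2 h)
    (hC2 : ContDiffOn ℝ 2 h {(0 : E2)}ᶜ)
    (n : E2) (hn : n ∈ Metric.sphere (0 : E2) 1)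
    (s : E2)
    (hextr : ∀ p ∈ Metric.sphere (0 : E2) 1, ⟪gradient h p, n⟫ ≤ ⟪s, n⟫)
    -- a closed arc `γ θ = (cos θ) • a + (sin θ) • b`, `θ ∈ [θ₁, θ₂]`, of `S¹`
    (a b : E2) (ha : ‖a‖ = 1) (hb : ‖b‖ = 1) (hab : ⟪a, b⟫ = 0)
    (θ₁ θ₂ : ℝ)
    (γ : ℝ → E2) (hγ : ∀ θ : ℝ, γ θ = Real.cos θ • a + Real.sin θ • b)
    -- whose endpoints lie in `x_h⁻¹(s)`
    (hend₁ : gradient h (γ θ₁) = s) (hend₂ : gradient h (γ θ₂) = s)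
    -- and whose interior is disjoint from `{n, -n}`
    (hint : ∀ θ ∈ Set.Ioo θ₁ θ₂, γ θ ≠ n ∧ γ θ ≠ -n) :
    ∀ θ ∈ Set.Icc θ₁ θ₂, gradient h (γ θ) = s := by
  obtain rfl : γ = fun θ => Real.cos θ • a + Real.sin θ • b := funext hγ
  have hframe (θ : ℝ) := (show Orthonormal ℝ ![a, b] by simp [ha, hb, hab]).rotate θ
  refine gradient_eq_on_arc_of_extremal finrank_euclideanSpace_fin hhom
    (hC2.differentiableOn (by norm_num)) (by simpa using hn) hframe (fun θ => ?_) (fun θ => ?_)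
    (fun θ _ => hextr _ (by simpa using (hframe θ).norm_eq_one 0)) hend₁ hend₂ hint
  · exact ((Real.hasDerivAt_cos θ).smul_const a).add ((Real.hasDerivAt_sin θ).smul_const b)
  · exact (((Real.hasDerivAt_sin θ).neg.smul_const a).add
      ((Real.hasDerivAt_cos θ).smul_const b)).congr_deriv (by simp only [neg_add, neg_smul])

/-- **Martinez-Maure, Lemma 1.** Let `s` be an extremal point of a plane
hedgehog `H_h ⊂ ℝ²` in direction `n ∈ S¹`. Then the connected components
of `x_h⁻¹(s)` on `S¹` are separated from one another by the points `n`
and `-n`: any closed arc `Γ ⊂ S¹` whose two endpoints lie in `x_h⁻¹(s)`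
and whose interior avoids `{n, -n}` is entirely contained in `x_h⁻¹(s)`. -/
theorem plane_hedgehog_extremal_components
    (h : E2 → ℝ) (hhom : PosHomog2 h)
    (hC2 : ContDiffOn ℝ 2 h {(0 : E2)}ᶜ)
    (n : E2) (hn : n ∈ Metric.sphere (0 : E2) 1)
    (s : E2) (hs : s ∈ gradient h '' Metric.sphere (0 : E2) 1)
    (hextr : ∀ p ∈ Metric.sphere (0 : E2) 1, ⟪gradient h p, n⟫ ≤ ⟪s, n⟫)
    -- a closed arc `γ θ = (cos θ) • a + (sin θ) • b`, `θ ∈ [θ₁, θ₂]`, of `S¹`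
    (a b : E2) (ha : ‖a‖ = 1) (hb : ‖b‖ = 1) (hab : ⟪a, b⟫ = 0)
    (θ₁ θ₂ : ℝ) (hθ : θ₁ ≤ θ₂)
    (γ : ℝ → E2) (hγ : ∀ θ : ℝ, γ θ = Real.cos θ • a + Real.sin θ • b)
    -- whose endpoints lie in `x_h⁻¹(s)`
    (hend₁ : gradient h (γ θ₁) = s) (hend₂ : gradient h (γ θ₂) = s)
    -- and whose interior is disjoint from `{n, -n}`
    (hint : ∀ θ ∈ Set.Ioo θ₁ θ₂, γ θ ≠ n ∧ γ θ ≠ -n) :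
    ∀ θ ∈ Set.Icc θ₁ θ₂, gradient h (γ θ) = s :=
  plane_hedgehog_extremal_components_general h hhom hC2 n hn s hextr a b ha hb hab θ₁ θ₂ γ hγ hend₁
    hend₂ hint
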